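/- Let (Q, f) be a triangulation quiver with at least three vertices, and let β be an arrow whose g-orbit has exactly 3 elements, i.e., n_β = 3. Then β is not a loop. (Step in the proof of Lemma 6.6, implication (iv) ⇒ (i).) -/

import Mathlib

/-- A triangulation quiver: a finite connected 2-regular quiver `(V, A, s, t)` together
with a permutation `f` of the arrows satisfying `s (f a) = t a` and `f ∘ f ∘ f = id`.
The field `bar` records, for each arrow `a`, the unique arrow `ᾱ ≠ α` with the same
source (it exists and is unique by 2-regularity), together with its defining properties. -/
structure TriangulationQuiver where
  V : Type
  A : Type
  fintypeV : Fintype V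
  fintypeA : Fintype A
  s : A → V
  t : A → V
  two_regular_src : ∀ v : V, Set.ncard {a : A | s a = v} = 2
  two_regular_tgt : ∀ v : V, Set.ncard {a : A | t a = v} = 2
  connected : ∀ u v : V,
    Relation.ReflTransGen (fun x y => ∃ a : A, (s a = x ∧ t a = y) ∨ (s a = y ∧ t a = x)) u v
  f : A → A
  f_cube : ∀ a : A, f (f (f a)) = a
  s_f : ∀ a : A, s (f a) = t a
  bar : A → A
  bar_src : ∀ a : A, s (bar a) = s a
  bar_ne : ∀ a : A, bar a ≠ a
  bar_unique : ∀ a b : A, s b = s a → b ≠ a → b = bar a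

attribute [instance] TriangulationQuiver.fintypeV TriangulationQuiver.fintypeA

namespace TriangulationQuiver

variable (Q : TriangulationQuiver)

/-- The second permutation of arrows: `g α = \overline{f α}`. -/
def g (a : Q.A) : Q.A := Q.bar (Q.f a)

/-- The `g`-orbit of an arrow. -/
def gOrbit (a : Q.A) : Set Q.A := {b : Q.A | ∃ k : ℕ, Q.g^[k] a = b}

/-- `n α` is the number of arrows in the `g`-orbit of `α`. -/
noncomputable def n (a : Q.A) : ℕ := (Q.gOrbit a).ncard

end TriangulationQuiver

/-!
Let `b` be a loop at `x`. Then `f b ∈ {b, b̄}`, and `f b = b̄` would make `b` a fixed point of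
`g`; so `f b = b` and the `g`-orbit is `b, b̄, g b̄` with `g³ b = b`. Chasing these arrows shows
that every arrow starting at `x` or at `y = t b̄` ends in `{x, y}`. In a 2-regular quiver a set of
vertices closed under outgoing arrows is also closed under incoming ones, so by connectedness the
quiver has at most the two vertices `x, y`.
-/

theorem Function.ncard_setOf_iterate_eq_minimalPeriod {α : Type*} {f : α → α} {x : α}
    (hx : x ∈ Function.periodicPts f) :
    {y | ∃ k, f^[k] x = y}.ncard = Function.minimalPeriod f x := by
  have horbit : {y | ∃ k, f^[k] x = y} = (f^[·] x) '' Set.Iio (Function.minimalPeriod f x) := by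
    ext y
    constructor
    · rintro ⟨k, rfl⟩
      exact ⟨k % _, Nat.mod_lt _ (Function.minimalPeriod_pos_of_mem_periodicPts hx),
        Function.iterate_mod_minimalPeriod_eq⟩
    · rintro ⟨k, -, rfl⟩
      exact ⟨k, rfl⟩
  rw [horbit, Function.iterate_injOn_Iio_minimalPeriod.ncard_image, ← Finset.coe_Iio,
    Set.ncard_coe_finset, Nat.card_Iio]

theorem Set.ncard_preimage_of_ncard_fiber {α β : Type*} [Fintype α] [Fintype β] {φ : α → β}
    {k : ℕ} (hφ : ∀ v, {a | φ a = v}.ncard = k) (S : Set β) :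
    (φ ⁻¹' S).ncard = k * S.ncard := by
  classical
  rw [Set.ncard_eq_toFinset_card', Set.ncard_eq_toFinset_card',
    Finset.card_eq_sum_card_fiberwise (f := φ) (t := S.toFinset) (fun a ha => by simpa using ha),
    Finset.sum_congr rfl (g := fun _ => k), Finset.sum_const, smul_eq_mul, mul_comm]
  intro v hv
  rw [← hφ v, Set.ncard_eq_toFinset_card']
  congr 1
  ext a
  simp only [Finset.mem_filter, Set.mem_toFinset, Set.mem_preimage] at hv ⊢
  exact ⟨fun h => h.2, fun h => ⟨h ▸ hv, h⟩⟩

theorem Set.eq_or_eq_or_eq_of_ncard_eq_two {α : Type*} {S : Set α} (hS : S.ncard = 2)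
    {a b c : α} (ha : a ∈ S) (hb : b ∈ S) (hc : c ∈ S) : a = b ∨ a = c ∨ b = c := by
  obtain ⟨p, q, -, rfl⟩ := Set.ncard_eq_two.mp hS
  simp only [Set.mem_insert_iff, Set.mem_singleton_iff] at ha hb hc
  rcases ha with rfl | rfl <;> rcases hb with rfl | rfl <;> rcases hc with rfl | rfl <;> simp

namespace TriangulationQuiver

variable (Q : TriangulationQuiver)

theorem bar_bar (a : Q.A) : Q.bar (Q.bar a) = a :=
  (Q.bar_unique _ _ (Q.bar_src a).symm (Q.bar_ne a).symm).symm

theorem eq_or_eq_bar_of_s_eq {a c : Q.A} (h : Q.s c = Q.s a) : c = a ∨ c = Q.bar a :=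
  (em (c = a)).imp id (Q.bar_unique a c h)

theorem f_injective : Function.Injective Q.f :=
  Function.LeftInverse.injective (g := fun a => Q.f (Q.f a)) Q.f_cube

theorem g_injective : Function.Injective Q.g :=
  Function.LeftInverse.injective (g := fun a => Q.f (Q.f (Q.bar a))) fun a => by
    simp only [g, bar_bar, f_cube]

theorem s_g (a : Q.A) : Q.s (Q.g a) = Q.t a := by
  rw [g, bar_src, s_f]

theorem n_eq_minimalPeriod (a : Q.A) : Q.n a = Function.minimalPeriod Q.g a :=
  Function.ncard_setOf_iterate_eq_minimalPeriod (Q.g_injective.mem_periodicPts a)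

theorem ncard_setOf_s_mem (S : Set Q.V) : {a | Q.s a ∈ S}.ncard = 2 * S.ncard :=
  Set.ncard_preimage_of_ncard_fiber Q.two_regular_src S

theorem ncard_setOf_t_mem (S : Set Q.V) : {a | Q.t a ∈ S}.ncard = 2 * S.ncard :=
  Set.ncard_preimage_of_ncard_fiber Q.two_regular_tgt S

/-- Both sets of arrows have `2 |S|` elements. -/
theorem s_mem_of_t_mem {S : Set Q.V} (hS : ∀ a, Q.s a ∈ S → Q.t a ∈ S) {a : Q.A}
    (ha : Q.t a ∈ S) : Q.s a ∈ S := by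
  have hsub : {a | Q.s a ∈ S} ⊆ {a | Q.t a ∈ S} := fun a => hS a
  have heq : {a | Q.s a ∈ S} = {a | Q.t a ∈ S} :=
    Set.eq_of_subset_of_ncard_le hsub (by rw [ncard_setOf_s_mem, ncard_setOf_t_mem])
  exact heq.symm.subset ha

theorem eq_univ_of_forall_t_mem {S : Set Q.V} (hne : S.Nonempty)
    (hS : ∀ a, Q.s a ∈ S → Q.t a ∈ S) : S = Set.univ := by
  obtain ⟨x, hx⟩ := hne
  refine Set.eq_univ_of_forall fun v => ?_
  induction Q.connected x v with
  | refl => exact hx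
  | tail _ hstep ih =>
    obtain ⟨a, ⟨rfl, rfl⟩ | ⟨rfl, rfl⟩⟩ := hstep
    · exact hS a ih
    · exact Q.s_mem_of_t_mem hS ih

theorem card_V_le_of_forall_t_mem {S : Set Q.V} (hne : S.Nonempty)
    (hS : ∀ a, Q.s a ∈ S → Q.t a ∈ S) : Fintype.card Q.V ≤ S.ncard := by
  rw [Q.eq_univ_of_forall_t_mem hne hS, Set.ncard_univ, Nat.card_eq_fintype_card]

/-- With `y = t b̄`, the arrows leaving `x` are `b, b̄` and those leaving `y` are `f b̄, g b̄`;
all four end in `{x, y}`. -/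
theorem card_V_le_two_of_loop {b : Q.A} (hloop : Q.s b = Q.t b) (hfb : Q.f b = b)
    (hg3 : Q.g (Q.g (Q.g b)) = b) : Fintype.card Q.V ≤ 2 := by
  set x := Q.s b
  set y := Q.t (Q.bar b)
  set d := Q.f (Q.bar b)
  have hgb : Q.g b = Q.bar b := by rw [g, hfb]
  have hge : Q.g (Q.bar d) = b := by rwa [hgb] at hg3
  have hsd : Q.s d = y := Q.s_f _
  have hte : Q.t (Q.bar d) = x := by rw [← s_g, hge]
  have htfd : Q.t (Q.f d) = x := by rw [← s_f, f_cube, bar_src]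
  have hfd : Q.f d ≠ b := fun h =>
    Q.bar_ne b (Q.f_injective ((Q.f_injective (h.trans hfb.symm)).trans hfb.symm))
  have htd : Q.t d = y := by
    rcases Set.eq_or_eq_or_eq_of_ncard_eq_two (Q.two_regular_tgt x) hloop.symm hte htfd with
      h | h | h
    · rw [← bar_bar Q d, ← h]
    · exact absurd h.symm hfd
    · rw [← s_f, ← h, bar_src, hsd]
  have hclosed : ∀ a, Q.s a ∈ ({x, y} : Set Q.V) → Q.t a ∈ ({x, y} : Set Q.V) := by
    rintro a (hx | hy)
    · rcases Q.eq_or_eq_bar_of_s_eq hx with rfl | rfl <;> simp [← hloop, y]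
    · rcases Q.eq_or_eq_bar_of_s_eq (hy.trans hsd.symm) with rfl | rfl <;> simp [htd, hte]
  calc Fintype.card Q.V ≤ ({x, y} : Set Q.V).ncard :=
        Q.card_V_le_of_forall_t_mem (Set.insert_nonempty x {y}) hclosed
    _ ≤ 2 := (Set.ncard_insert_le x {y}).trans (by rw [Set.ncard_singleton])

end TriangulationQuiver

/-- Step in the proof of Lemma 6.6, (iv) ⇒ (i): in a triangulation quiver with at least
three vertices, an arrow whose `g`-orbit has exactly 3 elements is not a loop. -/
theorem stmt_4 (Q : TriangulationQuiver) (h3 : 3 ≤ Fintype.card Q.V)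
    (b : Q.A) (hb : Q.n b = 3) :
    Q.s b ≠ Q.t b := by
  intro hloop
  rw [Q.n_eq_minimalPeriod] at hb
  rcases Q.eq_or_eq_bar_of_s_eq (a := b) (c := Q.f b) (by rw [Q.s_f, hloop]) with hfb | hfb
  · have hg3 : Q.g^[3] b = b := hb ▸ Function.iterate_minimalPeriod
    have hcard := Q.card_V_le_two_of_loop hloop hfb hg3
    omega
  · have hgb : Q.g b = b := by rw [TriangulationQuiver.g, hfb, Q.bar_bar]
    rw [Function.minimalPeriod_eq_one_iff_isFixedPt.mpr hgb] at hb
    omega
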